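/- If N is a 1-absorbing primary submodule of a finitely generated multiplication R-module M, then M-rad(N) is a prime submodule of M. -/

import Mathlib

/-!
Write `J = (N :_R M)`. Over a finitely generated multiplication module, every prime ideal
`q ⊇ J` yields a prime submodule `qM ⊇ N`, and the determinant trick shows `sM ⊆ qM ⇒ s ∈ q`.
Together with the fact that `(P :_R M)` is a prime ideal for every prime submodule `P`, this
gives `M-rad(N) = √J · M` and `(M-rad(N) :_R M) ⊆ √J`. The 1-absorbing condition makes `√J`
prime: if `aⁿbⁿ ∈ J` with `a, b` non-units and `a²ⁿ ∉ J`, then `a²ⁿ (bⁿm) ∈ N` forces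
`bⁿm ∈ M-rad(N)` for all `m`, so `b ∈ √J`. Hence `M-rad(N) = √J · M` is prime.
-/

open Submodule

section Defs

variable {R : Type*} [CommRing R]

/-- A prime submodule: proper, and `a • m ∈ N` implies `m ∈ N` or `a ∈ (N :_R M)`. -/
def IsPrimeSubmodule {M : Type*} [AddCommGroup M] [Module R M] (N : Submodule R M) : Prop :=
  N ≠ ⊤ ∧ ∀ (a : R) (m : M), a • m ∈ N → m ∈ N ∨ a ∈ N.colon ⊤

/-- The `M`-radical of `N`: intersection of all prime submodules containing `N`. -/
def Mrad {M : Type*} [AddCommGroup M] [Module R M] (N : Submodule R M) : Submodule R M :=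
  sInf {P | IsPrimeSubmodule P ∧ N ≤ P}

/-- A 1-absorbing primary submodule. -/
def Is1AbsPrimary {M : Type*} [AddCommGroup M] [Module R M] (N : Submodule R M) : Prop :=
  N ≠ ⊤ ∧ ∀ a b : R, ¬ IsUnit a → ¬ IsUnit b → ∀ m : M,
    (a * b) • m ∈ N → a * b ∈ N.colon ⊤ ∨ m ∈ Mrad N

/-- A 2-absorbing primary submodule. -/
def Is2AbsPrimary {M : Type*} [AddCommGroup M] [Module R M] (N : Submodule R M) : Prop :=
  N ≠ ⊤ ∧ ∀ (a b : R) (m : M), (a * b) • m ∈ N →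
    a * b ∈ N.colon ⊤ ∨ a • m ∈ Mrad N ∨ b • m ∈ Mrad N

/-- A 1-absorbing primary ideal. -/
def Is1AbsPrimaryIdeal {A : Type*} [CommRing A] (I : Ideal A) : Prop :=
  I ≠ ⊤ ∧ ∀ a b c : A, ¬ IsUnit a → ¬ IsUnit b → ¬ IsUnit c →
    a * b * c ∈ I → a * b ∈ I ∨ c ∈ I.radical

/-- A multiplication module: every submodule `N` satisfies `N = (N :_R M) M`. -/
def IsMultiplicationModule (R M : Type*) [CommRing R] [AddCommGroup M] [Module R M] : Prop :=
  ∀ N : Submodule R M, N = (N.colon ⊤) • (⊤ : Submodule R M)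

end Defs

section

variable {R M : Type*} [CommRing R] [AddCommGroup M] [Module R M]

lemma Submodule.annihilator_le_colon_top (N : Submodule R M) :
    Module.annihilator R M ≤ N.colon ⊤ := fun _ hr =>
  mem_colon.2 fun m _ => (Module.mem_annihilator.1 hr m).symm ▸ N.zero_mem

lemma Submodule.colon_top_ne_top {N : Submodule R M} (hN : N ≠ ⊤) : N.colon ⊤ ≠ ⊤ := by
  rw [Ne, colon_eq_top_iff_subset]
  exact fun h => hN (eq_top_iff.2 fun m _ => h trivial)

/-- The determinant trick: Cayley–Hamilton for `s • id` gives a monic `p` with `p(s) • M = 0`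
and all non-leading coefficients in `I`, so `sⁿ ≡ p(s) ≡ 0 mod I`. -/
lemma mem_radical_of_forall_smul_mem_smul_top [Module.Finite R M] {I : Ideal R}
    (hI : Module.annihilator R M ≤ I) {s : R} (hs : ∀ m : M, s • m ∈ I • (⊤ : Submodule R M)) :
    s ∈ I.radical := by
  obtain ⟨p, hmonic, -, hcoeff, hp⟩ :=
    LinearMap.exists_monic_and_natDegree_eq_and_coeff_mem_pow_and_aeval_eq_zero R
      (algebraMap R (Module.End R M) s) I (by
        rintro _ ⟨m, rfl⟩
        simpa only [Module.algebraMap_end_apply] using hs m)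
  have heval : p.eval s ∈ I := hI <| Module.mem_annihilator.2 fun m => by
    simpa only [Polynomial.aeval_algebraMap_apply_eq_algebraMap_eval,
      Module.algebraMap_end_apply, LinearMap.zero_apply] using LinearMap.congr_fun hp m
  have hlower : ∑ k ∈ Finset.range p.natDegree, p.coeff k * s ^ k ∈ I :=
    I.sum_mem fun k hk => I.mul_mem_right _ <|
      Ideal.pow_le_self (Nat.sub_ne_zero_of_lt (Finset.mem_range.1 hk)) (hcoeff k)
  refine ⟨p.natDegree, ?_⟩
  have hsplit :
      p.eval s = (∑ k ∈ Finset.range p.natDegree, p.coeff k * s ^ k) + s ^ p.natDegree := by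
    rw [Polynomial.eval_eq_sum_range, Finset.sum_range_succ, hmonic.coeff_natDegree, one_mul]
  simpa only [hsplit, add_sub_cancel_left] using I.sub_mem heval hlower

lemma IsPrimeSubmodule.isPrime_colon {P : Submodule R M} (hP : IsPrimeSubmodule P) :
    (P.colon ⊤).IsPrime := by
  refine ⟨colon_top_ne_top hP.1, fun {a b} hab => or_iff_not_imp_left.2 fun ha => ?_⟩
  refine mem_colon.2 fun m _ => (hP.2 a (b • m) ?_).resolve_right ha
  simpa only [mul_smul] using mem_colon.1 hab m trivial

lemma radical_colon_smul_top_le_mrad (N : Submodule R M) :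
    (N.colon ⊤).radical • (⊤ : Submodule R M) ≤ Mrad N := by
  refine le_sInf fun P ⟨hP, hNP⟩ => smul_le.2 fun r hr m _ => ?_
  have : (N.colon ⊤).radical ≤ P.colon ⊤ :=
    hP.isPrime_colon.radical_le_iff.2 (colon_mono hNP le_rfl)
  exact mem_colon.1 (this hr) m trivial

section FiniteMultiplication

variable [Module.Finite R M] (hmul : IsMultiplicationModule R M)
include hmul

lemma isPrimeSubmodule_smul_top {q : Ideal R} [hq : q.IsPrime]
    (hann : Module.annihilator R M ≤ q) : IsPrimeSubmodule (q • (⊤ : Submodule R M)) := by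
  have mem_of_smul_top_le {s : R} (hs : ∀ m : M, s • m ∈ q • (⊤ : Submodule R M)) : s ∈ q :=
    hq.radical ▸ mem_radical_of_forall_smul_mem_smul_top hann hs
  refine ⟨fun htop => hq.ne_top <| (Ideal.eq_top_iff_one q).2 <|
    mem_of_smul_top_le fun m => by rw [htop]; exact mem_top, fun a m ham => ?_⟩
  by_cases haq : a ∈ q
  · exact Or.inr <| mem_colon.2 fun x _ => smul_mem_smul haq mem_top
  refine Or.inl ?_
  -- `⟨m⟩ = (⟨m⟩ :_R M) M`, and `(⟨m⟩ :_R M) ⊆ q` because `c • M ⊆ ⟨m⟩` gives `ac • M ⊆ ⟨am⟩ ⊆ qM`.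
  have hcolon : (span R {m}).colon ⊤ ≤ q := fun c hc => by
    refine (hq.mem_or_mem (mem_of_smul_top_le fun x => ?_)).resolve_left haq
    obtain ⟨r, hr⟩ := mem_span_singleton.1 (mem_colon.1 hc x trivial)
    rw [mul_smul, ← hr, smul_comm]
    exact smul_mem _ r ham
  have hm : m ∈ (span R {m}).colon ⊤ • (⊤ : Submodule R M) :=
    hmul (span R {m}) ▸ mem_span_singleton_self m
  exact smul_mono_left hcolon hm

lemma mrad_le_smul_top {N : Submodule R M} {q : Ideal R} [q.IsPrime] (hq : N.colon ⊤ ≤ q) :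
    Mrad N ≤ q • (⊤ : Submodule R M) := by
  refine sInf_le ⟨isPrimeSubmodule_smul_top hmul (N.annihilator_le_colon_top.trans hq), ?_⟩
  exact (hmul N).le.trans (smul_mono_left hq)

lemma colon_mrad_le_radical (N : Submodule R M) : (Mrad N).colon ⊤ ≤ (N.colon ⊤).radical := by
  intro s hs
  rw [Ideal.radical_eq_sInf, Ideal.mem_sInf]
  rintro q ⟨hJq, hq⟩
  have hsq := mem_radical_of_forall_smul_mem_smul_top (N.annihilator_le_colon_top.trans hJq)
    fun m => mrad_le_smul_top hmul hJq (mem_colon.1 hs m trivial)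
  rwa [hq.radical] at hsq

lemma Is1AbsPrimary.isPrime_radical_colon {N : Submodule R M} (hN : Is1AbsPrimary N) :
    (N.colon ⊤).radical.IsPrime := by
  set J := N.colon ⊤
  refine ⟨(Ideal.radical_eq_top.not).2 (colon_top_ne_top hN.1), fun {a b} hab => ?_⟩
  by_cases ha : IsUnit a
  · exact Or.inr ((Ideal.unit_mul_mem_iff_mem _ ha).1 hab)
  by_cases hb : IsUnit b
  · exact Or.inl ((Ideal.mul_unit_mem_iff_mem _ hb).1 hab)
  obtain ⟨n, hn⟩ := hab
  set a' := a ^ (n + 1)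
  set b' := b ^ (n + 1)
  have ha' : ¬IsUnit a' := by rwa [isUnit_pow_iff n.succ_ne_zero]
  have hab' : a' * b' ∈ J := by
    rw [← mul_pow]
    exact Ideal.pow_mem_of_pow_mem _ hn n.le_succ
  by_cases haa : a' * a' ∈ J
  · exact Or.inl ⟨2 * (n + 1), by rwa [two_mul, pow_add]⟩
  refine Or.inr (Ideal.mem_radical_of_pow_mem (m := n + 1) (colon_mrad_le_radical hmul N ?_))
  refine mem_colon.2 fun m _ => (hN.2 a' a' ha' ha' (b' • m) ?_).resolve_left haa
  have : (a' * a') • b' • m = a' • (a' * b') • m := by simp only [mul_smul]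
  exact this ▸ N.smul_mem a' (mem_colon.1 hab' m trivial)

end FiniteMultiplication

end

theorem mrad_isPrime {R M : Type*} [CommRing R] [AddCommGroup M]
    [Module R M] [Module.Finite R M] (hmul : IsMultiplicationModule R M)
    (N : Submodule R M) (hN : Is1AbsPrimary N) :
    IsPrimeSubmodule (Mrad N) := by
  have := hN.isPrime_radical_colon hmul
  have hrad : Mrad N = (N.colon ⊤).radical • (⊤ : Submodule R M) :=
    le_antisymm (mrad_le_smul_top hmul Ideal.le_radical) (radical_colon_smul_top_le_mrad N)
  rw [hrad]
  exact isPrimeSubmodule_smul_top hmul (N.annihilator_le_colon_top.trans Ideal.le_radical)
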